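/- Let n ≥ 1 and let (c_l) be the coefficients of the orthonormal basis e_l of the first coupled-SUSY Segal-Bargmann space: e_{2k}(z) = sqrt(Γ(1/(2n)) / ((2n)^{2k} Γ(k + 1/(2n)) k!)) z^{2nk} and e_{2k+1}(z) = sqrt(Γ(1/(2n)) / ((2n)^{2k+2-1/n} Γ(k + 2 - 1/(2n)) k!)) z^{2nk+2n-1}. Then for every fixed w ∈ ℂ, the series F_w(z) = ∑_{l=0}^∞ e_l(z) conj(e_l(w)) converges absolutely for all z ∈ ℂ, and the function z ↦ F_w(z) is entire. -/
import Mathlib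

open Real Complex

/-- The orthonormal basis elements `e_l` of the first coupled SUSY Segal-Bargmann space:
`e_{2k}(z) = √(Γ(1/(2n)) / ((2n)^{2k} Γ(k+1/(2n)) k!)) z^{2nk}` and
`e_{2k+1}(z) = √(Γ(1/(2n)) / ((2n)^{2k+2-1/n} Γ(k+2-1/(2n)) k!)) z^{2nk+2n-1}`. -/
noncomputable def eBasis (n : ℕ) (l : ℕ) (z : ℂ) : ℂ :=
  if Even l then
    (Real.sqrt (Real.Gamma (1 / (2 * n)) /
        ((2 * n : ℝ) ^ (2 * (l / 2)) * Real.Gamma ((l / 2 : ℕ) + 1 / (2 * n))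
          * ((l / 2).factorial : ℝ))) : ℂ) * z ^ (2 * n * (l / 2))
  else
    (Real.sqrt (Real.Gamma (1 / (2 * n)) /
        ((2 * n : ℝ) ^ ((2 * (l / 2) + 2 : ℝ) - 1 / n)
          * Real.Gamma ((l / 2 : ℕ) + 2 - 1 / (2 * n))
          * ((l / 2).factorial : ℝ))) : ℂ) * z ^ (2 * n * (l / 2) + 2 * n - 1)


lemma gamma_le_gamma_nat_add {b : ℝ} (hb : 1 ≤ b) (k : ℕ) :
    Real.Gamma b ≤ Real.Gamma (k + b) := by
  induction k with
  | zero => simp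
  | succ k ih =>
    have hb0 : (0:ℝ) < b := lt_of_lt_of_le one_pos hb
    have h1 : (0:ℝ) < (k:ℝ) + b := by positivity
    have heq : Real.Gamma (((k+1 : ℕ) : ℝ) + b) = ((k:ℝ) + b) * Real.Gamma ((k:ℝ) + b) := by
      have h2 := Real.Gamma_add_one (s := (k:ℝ) + b) (ne_of_gt h1)
      push_cast
      rw [show (k:ℝ) + 1 + b = ((k:ℝ) + b) + 1 by ring, h2]
    rw [heq]
    have hpos : 0 < Real.Gamma ((k:ℝ) + b) := Real.Gamma_pos_of_pos h1
    have h1k : (1:ℝ) ≤ (k:ℝ) + b := by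
      have : (0:ℝ) ≤ (k:ℝ) := Nat.cast_nonneg k
      linarith
    calc Real.Gamma b ≤ Real.Gamma ((k:ℝ) + b) := ih
    _ ≤ ((k:ℝ)+b) * Real.Gamma ((k:ℝ)+b) := le_mul_of_one_le_left hpos.le h1k

lemma gamma_lower {a : ℝ} (ha : 0 < a) (ha1 : a ≤ 1) (k : ℕ) :
    a * Real.Gamma a ≤ Real.Gamma (k + a) := by
  cases k with
  | zero =>
    simpa using mul_le_of_le_one_left (Real.Gamma_pos_of_pos ha).le ha1
  | succ j =>
    have h := gamma_le_gamma_nat_add (b := 1 + a) (by linarith) j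
    calc a * Real.Gamma a = Real.Gamma (a + 1) := (Real.Gamma_add_one ha.ne').symm
    _ = Real.Gamma (1 + a) := by rw [add_comm]
    _ ≤ Real.Gamma ((j:ℝ) + (1 + a)) := h
    _ = Real.Gamma (((j+1:ℕ):ℝ) + a) := by push_cast; ring_nf

noncomputable def eC (n l : ℕ) : ℝ :=
  if Even l then
    Real.sqrt (Real.Gamma (1 / (2 * n)) /
        ((2 * n : ℝ) ^ (2 * (l / 2)) * Real.Gamma ((l / 2 : ℕ) + 1 / (2 * n))
          * ((l / 2).factorial : ℝ)))
  else
    Real.sqrt (Real.Gamma (1 / (2 * n)) /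
        ((2 * n : ℝ) ^ ((2 * (l / 2) + 2 : ℝ) - 1 / n)
          * Real.Gamma ((l / 2 : ℕ) + 2 - 1 / (2 * n))
          * ((l / 2).factorial : ℝ)))

def eM (n l : ℕ) : ℕ := if Even l then 2 * n * (l / 2) else 2 * n * (l / 2) + 2 * n - 1

lemma summable_main (n : ℕ) (hn : 1 ≤ n) (t : ℝ) (ht : 0 ≤ t) :
    Summable (fun l : ℕ => eC n l ^ 2 * t ^ eM n l) := by
  have hn1 : (1:ℝ) ≤ (n:ℝ) := by exact_mod_cast hn
  have hN : (0:ℝ) < 2 * n := by linarith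
  have ha : (0:ℝ) < 1 / (2 * (n:ℝ)) := by positivity
  have ha1 : 1 / (2 * (n:ℝ)) ≤ 1 := by rw [div_le_one hN]; linarith
  have hGa : 0 < Real.Gamma (1 / (2 * (n:ℝ))) := Real.Gamma_pos_of_pos ha
  apply Summable.even_add_odd
  · -- even part
    have hsum : Summable (fun k : ℕ =>
        (2 * (n:ℝ)) * ((t ^ (2*n) / (2*(n:ℝ))^2) ^ k / (k.factorial : ℝ))) :=
      (Real.summable_pow_div_factorial _).mul_left _
    refine Summable.of_nonneg_of_le (fun k => mul_nonneg (sq_nonneg _) (by positivity))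
      (fun k => ?_) hsum
    have hk2 : (2*k)/2 = k := by omega
    have hEv : Even (2*k) := even_two_mul k
    have hGk : 0 < Real.Gamma ((k:ℝ) + 1 / (2 * (n:ℝ))) := Real.Gamma_pos_of_pos (by positivity)
    have hkey : 1 / (2 * (n:ℝ)) * Real.Gamma (1 / (2 * (n:ℝ)))
        ≤ Real.Gamma ((k:ℝ) + 1 / (2 * (n:ℝ))) := gamma_lower ha ha1 k
    have hE : (0:ℝ) ≤ Real.Gamma (1 / (2 * (n:ℝ))) /
        ((2 * (n:ℝ)) ^ (2 * k) * Real.Gamma ((k:ℝ) + 1 / (2 * (n:ℝ))) * (k.factorial : ℝ)) := by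
      have h1 : (0:ℝ) ≤ (2 * (n:ℝ)) ^ (2 * k) := by positivity
      have h2 : (0:ℝ) ≤ (k.factorial : ℝ) := by positivity
      exact div_nonneg hGa.le (mul_nonneg (mul_nonneg h1 hGk.le) h2)
    rw [eC, eM, if_pos hEv, if_pos hEv, hk2, Real.sq_sqrt hE]
    have hrw : (2 * (n:ℝ)) * ((t ^ (2*n) / (2*(n:ℝ))^2) ^ k / (k.factorial : ℝ))
        = Real.Gamma (1 / (2 * (n:ℝ))) * t ^ (2*n*k) /
          ((2 * (n:ℝ)) ^ (2 * k) * (1 / (2 * (n:ℝ)) * Real.Gamma (1 / (2 * (n:ℝ)))) * (k.factorial : ℝ)) := by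
      rw [div_pow, ← pow_mul, ← pow_mul]
      have h1 : ((k.factorial : ℝ)) ≠ 0 := by positivity
      field_simp
    rw [hrw, div_mul_eq_mul_div]
    gcongr
  · -- odd part
    have hb1 : (1:ℝ) ≤ 2 - 1 / (2 * (n:ℝ)) := by linarith
    have hGb : 0 < Real.Gamma (2 - 1 / (2 * (n:ℝ))) := Real.Gamma_pos_of_pos (by linarith)
    have hrpos : (0:ℝ) < (2*(n:ℝ)) ^ ((3:ℝ) - 1/(n:ℝ)) := Real.rpow_pos_of_pos hN _
    have hsum : Summable (fun k : ℕ =>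
        (Real.Gamma (1 / (2 * (n:ℝ))) * t ^ (2*n-1) /
          ((2*(n:ℝ)) ^ ((3:ℝ) - 1/(n:ℝ)) * Real.Gamma (2 - 1 / (2 * (n:ℝ)))))
          * ((t ^ (2*n) / (2*(n:ℝ))^2) ^ k / (k.factorial : ℝ))) :=
      (Real.summable_pow_div_factorial _).mul_left _
    refine Summable.of_nonneg_of_le (fun k => mul_nonneg (sq_nonneg _) (by positivity))
      (fun k => ?_) hsum
    have hk2 : (2*k+1)/2 = k := by omega
    have hOdd : ¬ Even (2*k+1) := by simp [Nat.even_add_one, Nat.even_mul]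
    have hGk : 0 < Real.Gamma ((k:ℝ) + 2 - 1 / (2 * (n:ℝ))) := by
      apply Real.Gamma_pos_of_pos
      have : (0:ℝ) ≤ (k:ℝ) := Nat.cast_nonneg k
      linarith
    have hkey : Real.Gamma (2 - 1 / (2 * (n:ℝ))) ≤ Real.Gamma ((k:ℝ) + 2 - 1 / (2 * (n:ℝ))) := by
      have h := gamma_le_gamma_nat_add hb1 k
      rwa [show (k:ℝ) + (2 - 1 / (2 * (n:ℝ))) = (k:ℝ) + 2 - 1 / (2 * (n:ℝ)) by ring] at h
    have hsplit : (2*(n:ℝ)) ^ ((2 * ((((2*k+1):ℕ):ℝ) / 2) + 2) - 1/(n:ℝ))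
        = (2*(n:ℝ)) ^ (2*k) * (2*(n:ℝ)) ^ ((3:ℝ) - 1/(n:ℝ)) := by
      rw [show (2 * ((((2*k+1):ℕ):ℝ) / 2) + 2) - 1/(n:ℝ)
          = ((2*k : ℕ) : ℝ) + ((3:ℝ) - 1/(n:ℝ)) by push_cast; ring,
        Real.rpow_add hN, Real.rpow_natCast]
    have hmsplit : t ^ (2*n*k + 2*n - 1) = t ^ (2*n*k) * t ^ (2*n-1) := by
      rw [← pow_add]; congr 1; omega
    rw [eC, eM, if_neg hOdd, if_neg hOdd, hk2]
    have hO : (0:ℝ) ≤ Real.Gamma (1 / (2 * (n:ℝ))) /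
        ((2*(n:ℝ)) ^ ((2 * ((((2*k+1):ℕ):ℝ) / 2) + 2) - 1/(n:ℝ))
          * Real.Gamma ((k:ℝ) + 2 - 1 / (2 * (n:ℝ))) * (k.factorial : ℝ)) := by
      have h1 : (0:ℝ) ≤ (2*(n:ℝ)) ^ ((2 * ((((2*k+1):ℕ):ℝ) / 2) + 2) - 1/(n:ℝ)) :=
        (Real.rpow_pos_of_pos hN _).le
      have h2 : (0:ℝ) ≤ (k.factorial : ℝ) := by positivity
      exact div_nonneg hGa.le (mul_nonneg (mul_nonneg h1 hGk.le) h2)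
    rw [Real.sq_sqrt hO, hsplit, hmsplit]
    have hrw : (Real.Gamma (1 / (2 * (n:ℝ))) * t ^ (2*n-1) /
          ((2*(n:ℝ)) ^ ((3:ℝ) - 1/(n:ℝ)) * Real.Gamma (2 - 1 / (2 * (n:ℝ)))))
          * ((t ^ (2*n) / (2*(n:ℝ))^2) ^ k / (k.factorial : ℝ))
        = Real.Gamma (1 / (2 * (n:ℝ))) * (t ^ (2*n*k) * t ^ (2*n-1)) /
          ((2*(n:ℝ)) ^ (2*k) * (2*(n:ℝ)) ^ ((3:ℝ) - 1/(n:ℝ))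
            * Real.Gamma (2 - 1 / (2 * (n:ℝ))) * (k.factorial : ℝ)) := by
      rw [div_pow, ← pow_mul, ← pow_mul]
      have h1 : ((k.factorial : ℝ)) ≠ 0 := by positivity
      have h2 : (2*(n:ℝ)) ^ ((3:ℝ) - 1/(n:ℝ)) ≠ 0 := hrpos.ne'
      field_simp
    rw [hrw, div_mul_eq_mul_div]
    gcongr

lemma eC_nonneg (n l : ℕ) : 0 ≤ eC n l := by
  unfold eC; split <;> exact Real.sqrt_nonneg _

lemma norm_eBasis (n l : ℕ) (z : ℂ) : ‖eBasis n l z‖ = eC n l * ‖z‖ ^ eM n l := by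
  unfold eBasis eC eM
  split <;>
  simp [norm_mul, _root_.abs_of_nonneg (Real.sqrt_nonneg _)]

lemma differentiable_eBasis (n l : ℕ) : Differentiable ℂ (eBasis n l) := by
  unfold eBasis
  split <;> exact (differentiable_pow _).const_mul _

lemma norm_term (n l : ℕ) (z w : ℂ) :
    ‖eBasis n l z * (starRingEnd ℂ) (eBasis n l w)‖
      = eC n l ^ 2 * (‖z‖ * ‖w‖) ^ eM n l := by
  rw [norm_mul, RCLike.norm_conj, norm_eBasis, norm_eBasis, mul_pow]
  ring

/-- For each `w ∈ ℂ`, the kernel series `F_w(z) = ∑ e_l(z) conj(e_l(w))` converges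
absolutely for all `z`, and `z ↦ F_w(z)` is entire. -/
theorem stmt17 (n : ℕ) (hn : 1 ≤ n) (w : ℂ) :
    (∀ z : ℂ, Summable (fun l : ℕ => ‖eBasis n l z * (starRingEnd ℂ) (eBasis n l w)‖))
    ∧ Differentiable ℂ (fun z : ℂ => ∑' l : ℕ,
        eBasis n l z * (starRingEnd ℂ) (eBasis n l w)) := by
  constructor
  · intro z
    have h := summable_main n hn (‖z‖ * ‖w‖) (by positivity)
    exact h.congr fun l => (norm_term n l z w).symm
  · intro z
    have hz : z ∈ Metric.ball (0:ℂ) (‖z‖ + 1) := by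
      simp only [Metric.mem_ball, dist_zero_right]
      linarith
    have hU : IsOpen (Metric.ball (0:ℂ) (‖z‖ + 1)) := Metric.isOpen_ball
    have hsum : Summable (fun l : ℕ => eC n l ^ 2 * ((‖z‖ + 1) * ‖w‖) ^ eM n l) :=
      summable_main n hn _ (by positivity)
    have hd : DifferentiableOn ℂ
        (fun y : ℂ => ∑' l : ℕ, eBasis n l y * (starRingEnd ℂ) (eBasis n l w))
        (Metric.ball (0:ℂ) (‖z‖ + 1)) := by
      apply Complex.differentiableOn_tsum_of_summable_norm hsum
        (fun l => ((differentiable_eBasis n l).mul_const _).differentiableOn) hU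
      intro l y hy
      rw [norm_term]
      have hy1 : ‖y‖ ≤ ‖z‖ + 1 := by
        have := Metric.mem_ball.mp hy
        rw [Complex.dist_eq] at this
        simpa using this.le
      have : (‖y‖ * ‖w‖) ^ eM n l ≤ ((‖z‖ + 1) * ‖w‖) ^ eM n l := by
        apply pow_le_pow_left₀ (by positivity)
        exact mul_le_mul_of_nonneg_right hy1 (norm_nonneg w)
      exact mul_le_mul_of_nonneg_left this (sq_nonneg _)
    exact hd.differentiableAt (hU.mem_nhds hz)
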